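/- arXiv:2303.06258 — 5 statements merged into one kernel-verified Lean document; each statement's English description precedes it below -/
import Mathlib

section
/- Let μ be a probability measure on a space S and J : S → ℝ a measurable function. For ε ∈ [0,1], the probability under μ^N of drawing N i.i.d. samples s₁,…,s_N such that μ{s : J(s) ≥ min_i J(s_i)} ≥ 1−ε is at least 1−(1−ε)^N. -/
/-!
A point `x` is bad when the upper tail `{y | J x ≤ J y}` has mass `< 1 - ε`. The bad points form
the preimage of an upper set of `ℝ`, hence an increasing union of such tails, so by continuity from
below they have mass at most `1 - ε`. If the minimum of the samples is bad then every sample is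
bad, which has probability at most `(1 - ε) ^ N` under the product measure.
-/

open MeasureTheory ENNReal

section Tail

variable {S : Type*} [MeasurableSpace S]

theorem IsUpperSet.measure_preimage_eq_iSup (μ : Measure S) (J : S → ℝ) {T : Set ℝ}
    (hT : IsUpperSet T) : μ (J ⁻¹' T) = ⨆ t : T, μ {x | (t : ℝ) ≤ J x} := by
  have := hT.ordConnected
  have hunion : J ⁻¹' T = ⋃ t : T, {x | (t : ℝ) ≤ J x} := by
    ext x
    simp only [Set.mem_preimage, Set.mem_iUnion, Set.mem_ofPred_eq, Subtype.exists,
      exists_prop]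
    exact ⟨fun hx => ⟨J x, hx, le_rfl⟩, fun ⟨t, ht, htx⟩ => hT htx ht⟩
  rw [hunion]
  exact Antitone.measure_iUnion fun t t' hst x (hx : (t' : ℝ) ≤ J x) =>
    show (t : ℝ) ≤ J x from le_trans hst hx

theorem measure_setOf_measure_tail_lt_le (μ : Measure S) (J : S → ℝ) (c : ℝ≥0∞) :
    μ {x | μ {y | J x ≤ J y} < c} ≤ c := by
  set T : Set ℝ := {t | μ {y | t ≤ J y} < c}
  have hT : IsUpperSet T := fun _ _ hst ht =>
    (measure_mono fun _ hy => le_trans hst hy).trans_lt ht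
  change μ (J ⁻¹' T) ≤ c
  rw [hT.measure_preimage_eq_iSup]
  exact iSup_le fun t => t.2.le

theorem measure_pi_forall_measure_tail_lt_le {ι : Type*} [Fintype ι] (μ : Measure S)
    [SigmaFinite μ] (J : S → ℝ) (c : ℝ≥0∞) :
    Measure.pi (fun _ : ι => μ) {s | ∀ i, μ {y | J (s i) ≤ J y} < c} ≤ c ^ Fintype.card ι := by
  have hpi : {s : ι → S | ∀ i, μ {y | J (s i) ≤ J y} < c} =
      Set.univ.pi fun _ => {x | μ {y | J x ≤ J y} < c} := by
    ext s
    simp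
  rw [hpi, Measure.pi_pi, ← Finset.card_univ, ← Finset.prod_const]
  exact Finset.prod_le_prod' fun _ _ => measure_setOf_measure_tail_lt_le μ J c

end Tail

theorem best_of_N_min_percentile_general
    {S : Type*} [MeasurableSpace S] (μ : Measure S) [IsProbabilityMeasure μ]
    (J : S → ℝ) (N : ℕ) (hN : 0 < N)
    (ε : ℝ) :
    (Measure.pi fun _ : Fin N => μ)
      {s : Fin N → S |
        μ {x : S | J x ≥ Finset.univ.inf' ⟨⟨0, hN⟩, Finset.mem_univ _⟩ (fun i => J (s i))}
          ≥ ENNReal.ofReal (1 - ε)}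
      ≥ 1 - (ENNReal.ofReal (1 - ε)) ^ N := by
  set c := ENNReal.ofReal (1 - ε)
  set P := Measure.pi fun _ : Fin N => μ
  set A := {s : Fin N → S |
    μ {x : S | J x ≥ Finset.univ.inf' ⟨⟨0, hN⟩, Finset.mem_univ _⟩ (fun i => J (s i))} ≥ c}
  have hAc : Aᶜ ⊆ {s | ∀ i, μ {y | J (s i) ≤ J y} < c} := by
    intro s hs i
    have hmin_bad : μ {x | J x ≥ Finset.univ.inf' _ fun i => J (s i)} < c := not_le.mp hs
    have htail_sub : {y | J (s i) ≤ J y} ⊆ {x | J x ≥ Finset.univ.inf' _ fun i => J (s i)} :=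
      fun y (hy : J (s i) ≤ J y) =>
        show _ ≤ J y from (Finset.inf'_le _ (Finset.mem_univ i)).trans hy
    exact (measure_mono htail_sub).trans_lt hmin_bad
  have hPAc : P Aᶜ ≤ c ^ N := by
    simpa using (measure_mono hAc).trans (measure_pi_forall_measure_tail_lt_le μ J c)
  have hcover : 1 ≤ P A + P Aᶜ := by simpa using measure_univ_le_add_compl (μ := P) A
  exact (tsub_le_tsub_left hPAc 1).trans (tsub_le_iff_right.mpr hcover)

theorem best_of_N_min_percentile
    {S : Type*} [MeasurableSpace S] (μ : Measure S) [IsProbabilityMeasure μ]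
    (J : S → ℝ) (hJ : Measurable J) (N : ℕ) (hN : 0 < N)
    (ε : ℝ) (hε0 : 0 ≤ ε) (hε1 : ε ≤ 1) :
    (Measure.pi fun _ : Fin N => μ)
      {s : Fin N → S |
        μ {x : S | J x ≥ Finset.univ.inf' ⟨⟨0, hN⟩, Finset.mem_univ _⟩ (fun i => J (s i))}
          ≥ ENNReal.ofReal (1 - ε)}
      ≥ 1 - (ENNReal.ofReal (1 - ε)) ^ N :=
  best_of_N_min_percentile_general μ J N hN ε
end

section
/- Let μ be a probability measure on S and J : S → ℝ measurable. For ε ∈ (0,1], with probability at least 1−(1−ε)^N over N i.i.d. samples from μ, any sample point s* achieving the minimum sampled cost satisfies μ{s : J(s) < J(s*)} ≤ ε; that is, the best-of-N sample lies in the 100(1−ε)-percentile with respect to minimizing J. -/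
/-!
Call a point `y` good when `F (J y) ≤ e`, where `F r = μ {x | J x < r}` and `e = ofReal ε`.
The good points have probability at least `e`: they are the preimage of the lower set
`L = {r | F r ≤ e}`, and for `q = sSup L` either `q ∉ L`, so that `L ⊇ Iio q` already has mass
`F q > e`, or `L ⊇ Iic q`, whose mass is the right limit of `F` at `q`, a limit of values `> e`.
If one of the `N` independent samples is good then so is every minimiser of `J` among them,
and all `N` samples are bad with probability at most `(1 - e) ^ N`.
-/

open MeasureTheory ENNReal Set Filter Topology

namespace MeasureTheory

section Real

variable (ν : Measure ℝ) [IsFiniteMeasure ν]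

lemma tendsto_measure_Iio_atBot : Tendsto (fun r => ν (Iio r)) atBot (𝓝 0) := by
  have h := tendsto_measure_iInter_atBot (μ := ν) (fun _ => measurableSet_Iio.nullMeasurableSet)
    (fun _ _ h => Iio_subset_Iio h) ⟨0, measure_ne_top ν _⟩
  rwa [iInter_Iio_of_not_bddBelow_range (by simp), measure_empty] at h

lemma tendsto_measure_Iio_nhdsGT (q : ℝ) :
    Tendsto (fun r => ν (Iio r)) (𝓝[>] q) (𝓝 (ν (Iic q))) := by
  have h := tendsto_measure_biInter_gt (μ := ν) (s := Iio) (a := q)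
    (fun _ _ => measurableSet_Iio.nullMeasurableSet) (fun _ _ _ h => Iio_subset_Iio h)
    ⟨q + 1, by simp, measure_ne_top ν _⟩
  have hq : ⋂ r > q, Iio r = Iic q := by
    ext x
    simp only [mem_iInter, mem_Iio, mem_Iic]
    exact ⟨fun hx => not_lt.1 fun hqx => lt_irrefl x (hx x hqx), fun hx r hr => hx.trans_lt hr⟩
  rwa [hq] at h

lemma le_measure_setOf_measure_Iio_le {e : ℝ≥0∞} (he : e ≤ ν univ) :
    e ≤ ν {r | ν (Iio r) ≤ e} := by
  set L := {r | ν (Iio r) ≤ e}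
  have hL : ∀ ⦃a b⦄, a ≤ b → b ∈ L → a ∈ L := fun a b hab hb =>
    (measure_mono (Iio_subset_Iio hab)).trans hb
  rcases L.eq_empty_or_nonempty with hempty | hne
  · have : ∀ r, e ≤ ν (Iio r) := fun r => (not_le.1 (eq_empty_iff_forall_notMem.1 hempty r)).le
    exact (ge_of_tendsto' (tendsto_measure_Iio_atBot ν) this).trans zero_le
  by_cases hbdd : BddAbove L
  · set q := sSup L
    have hIio : Iio q ⊆ L := fun a ha => by
      obtain ⟨b, hb, hab⟩ := exists_lt_of_lt_csSup hne ha
      exact hL hab.le hb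
    by_cases hq : q ∈ L
    · have hIic : Iic q ⊆ L := fun a ha => hL ha hq
      have hgt : ∀ r > q, e ≤ ν (Iio r) := fun r hr =>
        (not_le.1 fun h => hr.not_ge (le_csSup hbdd h)).le
      calc e ≤ ν (Iic q) :=
            ge_of_tendsto (tendsto_measure_Iio_nhdsGT ν q) (eventually_nhdsWithin_of_forall hgt)
        _ ≤ ν L := measure_mono hIic
    · exact (not_le.1 hq).le.trans (measure_mono hIio)
  · have : L = univ := eq_univ_of_forall fun a => by
      obtain ⟨b, hb, hab⟩ := not_bddAbove_iff.1 hbdd a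
      exact hL hab.le hb
    rwa [this]

end Real

lemma measurable_measure_setOf_lt {S : Type*} [MeasurableSpace S] (μ : Measure S) (J : S → ℝ) :
    Measurable fun r : ℝ => μ {x | J x < r} :=
  Monotone.measurable fun _ _ h => measure_mono fun _ hx => hx.trans_le h

lemma le_measure_setOf_measure_lt_le {S : Type*} [MeasurableSpace S] (μ : Measure S)
    [IsFiniteMeasure μ] {J : S → ℝ} (hJ : Measurable J) {e : ℝ≥0∞} (he : e ≤ μ univ) :
    e ≤ μ {y | μ {x | J x < J y} ≤ e} := by
  have hmeas : MeasurableSet {r | μ.map J (Iio r) ≤ e} :=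
    measurableSet_le (measurable_measure_setOf_lt (μ.map J) id) measurable_const
  have h := le_measure_setOf_measure_Iio_le (μ.map J) (e := e)
    (by rwa [Measure.map_apply hJ MeasurableSet.univ, preimage_univ])
  rw [Measure.map_apply hJ hmeas] at h
  simp only [Measure.map_apply hJ measurableSet_Iio] at h
  exact h

lemma measure_pi_exists_mem {S ι : Type*} [MeasurableSpace S] [Fintype ι] (μ : Measure S)
    [IsProbabilityMeasure μ] {G : Set S} (hG : MeasurableSet G) :
    Measure.pi (fun _ : ι => μ) {s | ∃ i, s i ∈ G} = 1 - μ Gᶜ ^ Fintype.card ι := by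
  have h : {s : ι → S | ∃ i, s i ∈ G} = (univ.pi fun _ => Gᶜ)ᶜ := by ext; simp
  rw [h, prob_compl_eq_one_sub (MeasurableSet.univ_pi fun _ => hG.compl), Measure.pi_pi,
    Finset.prod_const, Finset.card_univ]

end MeasureTheory

theorem best_of_N_percentile_membership_general
    {S : Type*} [MeasurableSpace S] (μ : Measure S) [IsProbabilityMeasure μ]
    (J : S → ℝ) (hJ : Measurable J) (N : ℕ)
    (ε : ℝ) (hε0 : 0 < ε) (hε1 : ε ≤ 1) :
    (Measure.pi fun _ : Fin N => μ)
      {s : Fin N → S |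
        ∀ i : Fin N, (∀ j : Fin N, J (s i) ≤ J (s j)) →
          μ {x : S | J x < J (s i)} ≤ ENNReal.ofReal ε}
      ≥ 1 - (ENNReal.ofReal (1 - ε)) ^ N := by
  set G := {y | μ {x | J x < J y} ≤ ENNReal.ofReal ε}
  have hG : MeasurableSet G :=
    measurableSet_le ((measurable_measure_setOf_lt μ J).comp hJ) measurable_const
  have hGc : μ Gᶜ ≤ ENNReal.ofReal (1 - ε) := by
    rw [prob_compl_eq_one_sub hG, ofReal_sub _ hε0.le, ofReal_one]
    exact tsub_le_tsub_left (le_measure_setOf_measure_lt_le μ hJ (by simpa using hε1)) 1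
  calc 1 - ENNReal.ofReal (1 - ε) ^ N ≤ 1 - μ Gᶜ ^ N := by gcongr
    _ = Measure.pi (fun _ : Fin N => μ) {s | ∃ j, s j ∈ G} := by
      rw [measure_pi_exists_mem μ hG, Fintype.card_fin]
    _ ≤ _ := by
      refine measure_mono fun s ⟨j, hj⟩ i hi => ?_
      exact (measure_mono fun _ hx => hx.trans_le (hi j)).trans hj

theorem best_of_N_percentile_membership
    {S : Type*} [MeasurableSpace S] (μ : Measure S) [IsProbabilityMeasure μ]
    (J : S → ℝ) (hJ : Measurable J) (N : ℕ) (hN : 1 ≤ N)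
    (ε : ℝ) (hε0 : 0 < ε) (hε1 : ε ≤ 1) :
    (Measure.pi fun _ : Fin N => μ)
      {s : Fin N → S |
        ∀ i : Fin N, (∀ j : Fin N, J (s i) ≤ J (s j)) →
          μ {x : S | J x < J (s i)} ≤ ENNReal.ofReal ε}
      ≥ 1 - (ENNReal.ofReal (1 - ε)) ^ N :=
  best_of_N_percentile_membership_general μ J hJ N ε hε0 hε1
end

section
/- Let μ be a probability measure on S and T : S → ℝ measurable. For ε ∈ [0,1], with probability at least 1−(1−ε)^N over N i.i.d. samples s₁,…,s_N from μ, the maximum sampled value ζ* = max_i T(s_i) satisfies μ{s : T(s) ≤ ζ*} ≥ 1−ε. -/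
/-!
Write `F t = μ {x | T x ≤ t}` and call a sample `s` bad when `F (T s) < 1 - ε`. The bad values
of `T` form a lower set of `ℝ`; a compact subset of it has a largest element `t`, so its mass
under the law of `T` is at most `F t < 1 - ε`, and by inner regularity a sample is bad with
probability at most `1 - ε`. Hence all `N` samples are bad with probability at most
`(1 - ε) ^ N`, and as soon as one sample is good, so is the maximum, `F` being monotone.
-/

open MeasureTheory ENNReal Set

theorem measure_setOf_measure_Iic_lt_le {α : Type*} [LinearOrder α] [TopologicalSpace α]
    [OrderClosedTopology α] [MeasurableSpace α] [OpensMeasurableSpace α]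
    (ν : Measure α) [ν.InnerRegular] (p : ℝ≥0∞) :
    ν {t | ν (Iic t) < p} ≤ p := by
  have hlower : IsLowerSet {t | ν (Iic t) < p} := fun a b hba hb =>
    (measure_mono (Iic_subset_Iic.2 hba)).trans_lt hb
  rw [hlower.ordConnected.measurableSet.measure_eq_iSup_isCompact]
  refine iSup₂_le fun K hKU => iSup_le fun hK => ?_
  obtain rfl | hKne := K.eq_empty_or_nonempty
  · simp
  obtain ⟨m, hmK, hmax⟩ := hK.exists_isGreatest hKne
  exact ((measure_mono hmax).trans_lt (hKU hmK)).le

theorem one_sub_pow_le_measure_pi_exists_notMem {S ι : Type*} [MeasurableSpace S] [Fintype ι]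
    (μ : Measure S) [IsProbabilityMeasure μ] {B : Set S} {p : ℝ≥0∞} (hB : μ B ≤ p) :
    1 - p ^ Fintype.card ι ≤ Measure.pi (fun _ : ι => μ) {s | ∃ i, s i ∉ B} := by
  have hcompl : {s : ι → S | ∃ i, s i ∉ B} = (univ.pi fun _ => B)ᶜ := by
    ext s; simp
  calc 1 - p ^ Fintype.card ι ≤ 1 - μ B ^ Fintype.card ι := by gcongr
    _ = 1 - Measure.pi (fun _ : ι => μ) (univ.pi fun _ => B) := by
      rw [Measure.pi_pi, Finset.prod_const, Finset.card_univ]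
    _ ≤ _ := by
      rw [hcompl, tsub_le_iff_left, ← measure_univ (μ := Measure.pi fun _ : ι => μ)]
      exact measure_univ_le_add_compl _

theorem best_of_N_max_runtime_general
    {S : Type*} [MeasurableSpace S] (μ : Measure S) [IsProbabilityMeasure μ]
    (T : S → ℝ) (hT : Measurable T) (N : ℕ) (hN : 0 < N)
    (ε : ℝ) :
    (Measure.pi fun _ : Fin N => μ)
      {s : Fin N → S |
        μ {x : S | T x ≤ Finset.univ.sup' ⟨⟨0, hN⟩, Finset.mem_univ _⟩ (fun i => T (s i))}
          ≥ ENNReal.ofReal (1 - ε)}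
      ≥ 1 - (ENNReal.ofReal (1 - ε)) ^ N := by
  set p := ENNReal.ofReal (1 - ε)
  set ν := μ.map T
  have hcdf (t : ℝ) : μ {x | T x ≤ t} = ν (Iic t) := (Measure.map_apply hT measurableSet_Iic).symm
  have hbad : μ (T ⁻¹' {t | ν (Iic t) < p}) ≤ p :=
    (Measure.le_map_apply hT.aemeasurable _).trans (measure_setOf_measure_Iic_lt_le ν p)
  have hsome_good := one_sub_pow_le_measure_pi_exists_notMem (ι := Fin N) μ hbad
  rw [Fintype.card_fin] at hsome_good
  refine hsome_good.trans (measure_mono ?_)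
  rintro s ⟨i, hgood⟩
  rw [mem_preimage, mem_ofPred_eq, not_lt] at hgood
  have hmax : T (s i) ≤ Finset.univ.sup' _ (fun j => T (s j)) :=
    Finset.le_sup' (fun j => T (s j)) (Finset.mem_univ i)
  rw [mem_ofPred_eq, ge_iff_le, hcdf]
  exact hgood.trans (measure_mono (Iic_subset_Iic.2 hmax))

theorem best_of_N_max_runtime
    {S : Type*} [MeasurableSpace S] (μ : Measure S) [IsProbabilityMeasure μ]
    (T : S → ℝ) (hT : Measurable T) (N : ℕ) (hN : 0 < N)
    (ε : ℝ) (hε0 : 0 ≤ ε) (hε1 : ε ≤ 1) :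
    (Measure.pi fun _ : Fin N => μ)
      {s : Fin N → S |
        μ {x : S | T x ≤ Finset.univ.sup' ⟨⟨0, hN⟩, Finset.mem_univ _⟩ (fun i => T (s i))}
          ≥ ENNReal.ofReal (1 - ε)}
      ≥ 1 - (ENNReal.ofReal (1 - ε)) ^ N :=
  best_of_N_max_runtime_general μ T hT N hN ε
end

section
/- Let μ be a probability measure on S and J : S → ℝ measurable and bounded. Let ζ*_N denote the minimum of J over N i.i.d. samples from μ. Then the expectation over μ^N of μ{s : J(s) < ζ*_N} is at most 1/(N+1); moreover, when the distribution of J under μ is atomless this expectation equals 1/(N+1). -/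
/-!
Draw `N + 1` i.i.d. samples. By Fubini, the expected measure of `{x | J x < min_{i < N} J (s i)}`
is the probability that the extra sample is a strict argmin of `J` among all `N + 1` samples.
By exchangeability each of the `N + 1` samples is a strict argmin with the same probability, and
these events are disjoint, so that probability is at most `1 / (N + 1)`. When the law of `J` is
atomless, ties between two samples are null, so almost surely some sample is the strict argmin
and the bound is attained.
-/

open MeasureTheory ENNReal ProbabilityTheory

section StrictArgmin

variable {S ι α : Type*} [LinearOrder α]

def strictArgminSet (J : S → α) (j : ι) : Set (ι → S) := {s | ∀ i ≠ j, J (s j) < J (s i)}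

lemma pairwise_disjoint_strictArgminSet (J : S → α) :
    Pairwise (Function.onFun Disjoint fun j : ι => strictArgminSet J j) := fun j k hjk =>
  Set.disjoint_left.mpr fun _ hj hk => (hj k hjk.symm).asymm (hk j hjk)

lemma preimage_comp_equiv_strictArgminSet (J : S → α) (σ : ι ≃ ι) (j : ι) :
    (fun s : ι → S => s ∘ σ) ⁻¹' strictArgminSet J j = strictArgminSet J (σ j) := by
  ext s
  simp only [strictArgminSet, Set.mem_preimage, Set.mem_ofPred_eq, Function.comp_apply]
  exact σ.forall_congr fun {i} => by simp

variable [MeasurableSpace S]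

lemma measurePreserving_comp_equiv [Fintype ι] (μ : Measure S) [SigmaFinite μ] (σ : ι ≃ ι) :
    MeasurePreserving (fun s : ι → S => s ∘ σ)
      (Measure.pi fun _ => μ) (Measure.pi fun _ => μ) :=
  measurePreserving_arrowCongr' _ _ σ.symm (MeasurableEquiv.refl S) fun _ =>
    MeasurePreserving.id μ

variable [TopologicalSpace α] [OrderClosedTopology α] [SecondCountableTopology α]
  [MeasurableSpace α] [OpensMeasurableSpace α]

lemma measurableSet_strictArgminSet [Countable ι] {J : S → α} (hJ : Measurable J) (j : ι) :
    MeasurableSet (strictArgminSet (ι := ι) J j) := by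
  have : strictArgminSet J j = ⋂ i, ⋂ (_ : i ≠ j), {s : ι → S | J (s j) < J (s i)} := by
    ext s; simp [strictArgminSet]
  rw [this]
  exact .iInter fun i => .iInter fun _ =>
    measurableSet_lt (hJ.comp (measurable_pi_apply j)) (hJ.comp (measurable_pi_apply i))

variable [Fintype ι] (μ : Measure S) {J : S → α}

lemma measure_strictArgminSet_eq (hJ : Measurable J) [SigmaFinite μ] (j k : ι) :
    Measure.pi (fun _ : ι => μ) (strictArgminSet J j) =
      Measure.pi (fun _ : ι => μ) (strictArgminSet J k) := by
  classical
  rw [← Equiv.swap_apply_left j k, ← preimage_comp_equiv_strictArgminSet,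
    (measurePreserving_comp_equiv μ _).measure_preimage
      (measurableSet_strictArgminSet hJ j).nullMeasurableSet]

lemma card_mul_measure_strictArgminSet (hJ : Measurable J) [SigmaFinite μ] (j : ι) :
    Fintype.card ι * Measure.pi (fun _ : ι => μ) (strictArgminSet J j) =
      Measure.pi (fun _ : ι => μ) (⋃ k, strictArgminSet J k) := by
  rw [measure_iUnion (pairwise_disjoint_strictArgminSet J) (measurableSet_strictArgminSet hJ),
    tsum_fintype, Finset.sum_congr rfl fun k _ => measure_strictArgminSet_eq μ hJ k j,
    Finset.sum_const, Finset.card_univ, nsmul_eq_mul]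

lemma measure_pi_apply_eq_apply_eq_zero [IsProbabilityMeasure μ] (hJ : Measurable J)
    (hatom : ∀ a, μ {x | J x = a} = 0) {i j : ι} (hij : i ≠ j) :
    Measure.pi (fun _ : ι => μ) {s : ι → S | J (s i) = J (s j)} = 0 := by
  have hind : IndepFun (fun s : ι → S => s i) (fun s => s j) (Measure.pi fun _ => μ) :=
    (iIndepFun_pi (X := fun _ => id) fun _ => aemeasurable_id).indepFun hij
  have hlaw : (Measure.pi fun _ => μ).map (fun s : ι → S => (s i, s j)) = μ.prod μ := by
    rw [(indepFun_iff_map_prod_eq_prod_map_map (measurable_pi_apply i).aemeasurable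
      (measurable_pi_apply j).aemeasurable).1 hind, (measurePreserving_eval _ i).map_eq,
      (measurePreserving_eval _ j).map_eq]
  have hD : MeasurableSet {p : S × S | J p.1 = J p.2} :=
    measurableSet_eq_fun (hJ.comp measurable_fst) (hJ.comp measurable_snd)
  rw [← Set.preimage_ofPred_eq (p := fun p : S × S => J p.1 = J p.2)
      (f := fun s : ι → S => (s i, s j)),
    ← Measure.map_apply ((measurable_pi_apply i).prodMk (measurable_pi_apply j)) hD, hlaw,
    Measure.prod_apply_symm hD]
  simp [hatom]

lemma measure_compl_iUnion_strictArgminSet [Nonempty ι] [IsProbabilityMeasure μ]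
    (hJ : Measurable J) (hatom : ∀ a, μ {x | J x = a} = 0) :
    Measure.pi (fun _ : ι => μ) (⋃ k, strictArgminSet J k)ᶜ = 0 := by
  have hties : (⋃ k, strictArgminSet J k)ᶜ ⊆
      ⋃ (i : ι) (j : ι) (_ : i ≠ j), {s : ι → S | J (s i) = J (s j)} := by
    intro s hs
    obtain ⟨j, hj⟩ := Finite.exists_min fun j => J (s j)
    have : s ∉ strictArgminSet J j := fun h => hs (Set.mem_iUnion_of_mem j h)
    simp only [strictArgminSet, Set.mem_ofPred_eq, not_forall, not_lt] at this
    obtain ⟨i, hij, hle⟩ := this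
    exact Set.mem_iUnion.mpr ⟨i, Set.mem_iUnion₂_of_mem hij (hle.antisymm (hj i))⟩
  refine measure_mono_null hties <| measure_iUnion_null fun i => measure_iUnion_null fun j =>
    measure_iUnion_null fun hij => measure_pi_apply_eq_apply_eq_zero μ hJ hatom hij

lemma lintegral_measure_forall_lt_eq_measure_strictArgminSet_zero [SigmaFinite μ]
    (hJ : Measurable J) (n : ℕ) :
    ∫⁻ t : Fin n → S, μ {x | ∀ k, J x < J (t k)} ∂Measure.pi (fun _ => μ) =
      Measure.pi (fun _ : Fin (n + 1) => μ) (strictArgminSet J 0) := by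
  have hC : MeasurableSet {p : S × (Fin n → S) | ∀ k, J p.1 < J (p.2 k)} := by
    simp only [Set.ofPred_forall]
    exact .iInter fun k => measurableSet_lt (hJ.comp measurable_fst)
      (hJ.comp ((measurable_pi_apply k).comp measurable_snd))
  have hpre : MeasurableEquiv.piFinSuccAbove (fun _ => S) 0 ⁻¹'
      {p : S × (Fin n → S) | ∀ k, J p.1 < J (p.2 k)} = strictArgminSet J 0 := by
    ext s
    simp only [strictArgminSet, Set.mem_preimage, Set.mem_ofPred_eq,
      MeasurableEquiv.piFinSuccAbove_apply]
    exact ⟨fun h i hi => (Fin.exists_succ_eq.mpr hi).elim fun k hk => hk ▸ h k,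
      fun h k => h k.succ k.succ_ne_zero⟩
  rw [← hpre, (measurePreserving_piFinSuccAbove (fun _ => μ) 0).measure_preimage
    hC.nullMeasurableSet, Measure.prod_apply_symm hC]
  rfl

end StrictArgmin

theorem expected_falsifying_volume_general
    {S : Type*} [MeasurableSpace S] (μ : Measure S) [IsProbabilityMeasure μ]
    (J : S → ℝ) (hJ : Measurable J)
    (N : ℕ) (hN : 0 < N) :
    (∫⁻ s : Fin N → S,
        μ {x : S | J x < Finset.univ.inf' ⟨⟨0, hN⟩, Finset.mem_univ _⟩ (fun i => J (s i))}
        ∂(Measure.pi fun _ : Fin N => μ)) ≤ 1 / (N + 1) ∧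
    ((∀ r : ℝ, μ {s : S | J s = r} = 0) →
      (∫⁻ s : Fin N → S,
          μ {x : S | J x < Finset.univ.inf' ⟨⟨0, hN⟩, Finset.mem_univ _⟩ (fun i => J (s i))}
          ∂(Measure.pi fun _ : Fin N => μ)) = 1 / (N + 1)) := by
  have hmin (s : Fin N → S) : {x | J x < Finset.univ.inf' ⟨⟨0, hN⟩, Finset.mem_univ _⟩
      (fun i => J (s i))} = {x | ∀ k, J x < J (s k)} := by
    ext x
    simp only [Set.mem_ofPred_eq]
    exact (Finset.lt_inf'_iff _).trans (by simp)
  have hcard : (N + 1 : ℝ≥0∞) = Fintype.card (Fin (N + 1)) := by simp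
  simp_rw [hmin, lintegral_measure_forall_lt_eq_measure_strictArgminSet_zero μ hJ]
  rw [ENNReal.le_div_iff_mul_le (by simp) (by simp), ENNReal.eq_div_iff (by simp) (by simp),
    mul_comm, hcard, card_mul_measure_strictArgminSet μ hJ]
  exact ⟨prob_le_one, fun hatom => (prob_compl_eq_zero_iff
    (.iUnion (measurableSet_strictArgminSet hJ))).1
      (measure_compl_iUnion_strictArgminSet μ hJ hatom)⟩

theorem expected_falsifying_volume
    {S : Type*} [MeasurableSpace S] (μ : Measure S) [IsProbabilityMeasure μ]
    (J : S → ℝ) (hJ : Measurable J) (M : ℝ) (hbdd : ∀ s, |J s| ≤ M)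
    (N : ℕ) (hN : 0 < N) :
    (∫⁻ s : Fin N → S,
        μ {x : S | J x < Finset.univ.inf' ⟨⟨0, hN⟩, Finset.mem_univ _⟩ (fun i => J (s i))}
        ∂(Measure.pi fun _ : Fin N => μ)) ≤ 1 / (N + 1) ∧
    ((∀ r : ℝ, μ {s : S | J s = r} = 0) →
      (∫⁻ s : Fin N → S,
          μ {x : S | J x < Finset.univ.inf' ⟨⟨0, hN⟩, Finset.mem_univ _⟩ (fun i => J (s i))}
          ∂(Measure.pi fun _ : Fin N => μ)) = 1 / (N + 1)) :=
  expected_falsifying_volume_general μ J hJ N hN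
end

section
/- Let D be a finite decision set with uniform probability measure μ and J : D → ℝ. If among N i.i.d. uniform samples the minimum cost is ζ*, then with μ^N-probability at least 1−(1−ε)^N, the fraction of elements of D with cost strictly less than ζ* is at most ε. -/
/-!
If the minimum of the sample has more than an `ε`-fraction of `D` strictly below it, then so does
every sample point, i.e. every sample point lies in the set `A` of such points. Its cheapest
element has more than `ε · |D|` strictly better elements, none of them in `A` by minimality, so
`A` has mass at most `1 - ε`, and all `N` independent samples land in `A` with probability at
most `(1 - ε) ^ N`.
-/

open MeasureTheory ENNReal Finset ProbabilityTheory

section FractionBelow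

variable {D β : Type*} [Fintype D] [LinearOrder β]

noncomputable def fractionBelow (J : D → β) (ζ : β) : ℝ :=
  (#{d | J d < ζ} : ℝ) / Fintype.card D

theorem fractionBelow_mono (J : D → β) : Monotone (fractionBelow J) := fun _ _ h => by
  unfold fractionBelow
  gcongr

theorem card_filter_lt_fractionBelow_div_le (J : D → β) {ε : ℝ} (hε : ε ≤ 1) :
    (#{d | ε < fractionBelow J (J d)} : ℝ) / Fintype.card D ≤ 1 - ε := by
  classical
  set A : Finset D := {d | ε < fractionBelow J (J d)}
  obtain hA | hA := A.eq_empty_or_nonempty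
  · simp [hA, hε]
  obtain ⟨d₀, hd₀A, hd₀min⟩ := A.exists_min_image J hA
  have hcard : (0 : ℝ) < Fintype.card D := by
    exact_mod_cast Fintype.card_pos_iff.mpr ⟨d₀⟩
  have hdisj : Disjoint A ({d | J d < J d₀} : Finset D) :=
    disjoint_left.mpr fun d hdA hlt => (hd₀min d hdA).not_gt (mem_filter.mp hlt).2
  have hsum : (#A : ℝ) + #{d | J d < J d₀} ≤ Fintype.card D := by
    exact_mod_cast (card_union_of_disjoint hdisj).symm.trans_le (card_le_univ _)
  have hbelow : ε * Fintype.card D < #{d | J d < J d₀} :=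
    (lt_div_iff₀ hcard).mp (mem_filter.mp hd₀A).2
  rw [div_le_iff₀ hcard]
  linarith

end FractionBelow

theorem smul_count_eq_uniformOn_univ (D : Type*) [Fintype D] [MeasurableSpace D] :
    ((Fintype.card D : ℝ≥0∞)⁻¹ • Measure.count : Measure D) = uniformOn Set.univ := by
  ext s
  rw [uniformOn_univ, Measure.smul_apply, smul_eq_mul, ENNReal.div_eq_inv_mul]

theorem uniformOn_univ_finset {D : Type*} [Fintype D] [Nonempty D] [MeasurableSpace D]
    [MeasurableSingletonClass D] (s : Finset D) :
    uniformOn (Set.univ : Set D) s = ENNReal.ofReal ((#s : ℝ) / Fintype.card D) := by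
  rw [uniformOn_univ, Measure.count_apply_finset, ENNReal.ofReal_div_of_pos, ofReal_natCast,
    ofReal_natCast]
  exact_mod_cast Fintype.card_pos

theorem one_sub_pow_le_pi_of_compl_subset {ι Ω : Type*} [Fintype ι] [MeasurableSpace Ω]
    (ν : Measure Ω) [IsProbabilityMeasure ν] {A : Set Ω} {S : Set (ι → Ω)}
    (hS : Sᶜ ⊆ Set.univ.pi fun _ => A) :
    1 - ν A ^ Fintype.card ι ≤ Measure.pi (fun _ => ν) S := by
  have hSc : Measure.pi (fun _ => ν) Sᶜ ≤ ν A ^ Fintype.card ι := by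
    simpa [Measure.pi_pi] using measure_mono (μ := Measure.pi fun _ : ι => ν) hS
  calc 1 - ν A ^ Fintype.card ι ≤ 1 - Measure.pi (fun _ => ν) Sᶜ := tsub_le_tsub_left hSc 1
    _ ≤ Measure.pi (fun _ => ν) S := by
      rw [tsub_le_iff_right, ← measure_univ (μ := Measure.pi fun _ : ι => ν)]
      exact measure_univ_le_add_compl S

theorem finite_uniform_percentile_general
    {D : Type*} [Fintype D] [Nonempty D] [MeasurableSpace D] [MeasurableSingletonClass D]
    (J : D → ℝ) (N : ℕ) (hN : 0 < N) (ε : ℝ) (hε1 : ε ≤ 1) :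
    (Measure.pi fun _ : Fin N => ((Fintype.card D : ℝ≥0∞)⁻¹ • Measure.count : Measure D))
      {s : Fin N → D |
        ((Finset.univ.filter fun d : D =>
            J d < Finset.univ.inf' ⟨⟨0, hN⟩, Finset.mem_univ _⟩ (fun i => J (s i))).card : ℝ)
          / (Fintype.card D : ℝ) ≤ ε}
      ≥ 1 - (ENNReal.ofReal (1 - ε)) ^ N := by
  set A : Finset D := {d | ε < fractionBelow J (J d)}
  have hA : uniformOn Set.univ (A : Set D) ≤ ENNReal.ofReal (1 - ε) := by
    rw [uniformOn_univ_finset]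
    exact ENNReal.ofReal_le_ofReal (card_filter_lt_fractionBelow_div_le J hε1)
  rw [smul_count_eq_uniformOn_univ, ge_iff_le]
  refine le_trans ?_ (one_sub_pow_le_pi_of_compl_subset _ (A := A) ?_)
  · simpa using tsub_le_tsub_left (pow_le_pow_left' hA N) 1
  · intro s (hs : ¬_ ≤ ε) i _
    have hmin_le := fractionBelow_mono J (inf'_le (fun i => J (s i)) (mem_univ i))
    exact mem_filter.mpr ⟨mem_univ _, (not_le.mp hs).trans_le hmin_le⟩

theorem finite_uniform_percentile
    {D : Type*} [Fintype D] [Nonempty D] [MeasurableSpace D] [MeasurableSingletonClass D]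
    (J : D → ℝ) (N : ℕ) (hN : 0 < N) (ε : ℝ) (hε0 : 0 < ε) (hε1 : ε ≤ 1) :
    (Measure.pi fun _ : Fin N => ((Fintype.card D : ℝ≥0∞)⁻¹ • Measure.count : Measure D))
      {s : Fin N → D |
        ((Finset.univ.filter fun d : D =>
            J d < Finset.univ.inf' ⟨⟨0, hN⟩, Finset.mem_univ _⟩ (fun i => J (s i))).card : ℝ)
          / (Fintype.card D : ℝ) ≤ ε}
      ≥ 1 - (ENNReal.ofReal (1 - ε)) ^ N :=
  finite_uniform_percentile_general J N hN ε hε1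
end
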